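/- Let E be a topological graph, v ∈ E⁰ and e a negative orbit of v. Then the closed set closure(Orb(v, e)) is a maximal head: it is a non-empty closed invariant set such that for any v₁, v₂ in it and any neighborhoods V₁ of v₁ and V₂ of v₂, there exists w in the set with Orb⁺(w) ∩ V₁ ≠ ∅ and Orb⁺(w) ∩ V₂ ≠ ∅. -/

import Mathlib

open Set Topology

variable {E0 E1 : Type*} [TopologicalSpace E0] [TopologicalSpace E1]

/-- A set is positively invariant if the range of every edge with domain in it lies in it. -/
def PosInv (d r : E1 → E0) (X : Set E0) : Prop := ∀ e : E1, d e ∈ X → r e ∈ X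

/-- Sources: `E⁰ \ closure (r (E¹))`. -/
def Sce (r : E1 → E0) : Set E0 := (closure (Set.range r))ᶜ

/-- Vertices having a neighborhood with compact `r`-preimage. -/
def FinSet (r : E1 → E0) : Set E0 := {v | ∃ V ∈ 𝓝 v, IsCompact (r ⁻¹' V)}

/-- Regular vertices. -/
def Rg (r : E1 → E0) : Set E0 := FinSet r \ closure (Sce r)

/-- Singular vertices. -/
def Sg (r : E1 → E0) : Set E0 := (Rg r)ᶜ

/-- A set is negatively invariant if every regular vertex in it receives an edge from it. -/
def NegInv (d r : E1 → E0) (X : Set E0) : Prop :=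
  ∀ v ∈ X ∩ Rg r, ∃ e : E1, r e = v ∧ d e ∈ X

/-- Invariant = positively and negatively invariant. -/
def Invariant (d r : E1 → E0) (X : Set E0) : Prop := PosInv d r X ∧ NegInv d r X

/-- The chain condition for a finite path `(e 0, e 1, …, e n)` of edges:
`d (e k) = r (e (k+1))`. -/
def IsPath (d r : E1 → E0) {n : ℕ} (e : Fin (n + 1) → E1) : Prop :=
  ∀ i : Fin n, d (e i.castSucc) = r (e i.succ)

/-- The positive orbit `Orb⁺(v)`: ranges of finite paths with domain `v`. -/
def OrbPlus (d r : E1 → E0) (v : E0) : Set E0 :=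
  {v} ∪ {w | ∃ n : ℕ, ∃ e : Fin (n + 1) → E1,
    IsPath d r e ∧ d (e (Fin.last n)) = v ∧ r (e 0) = w}

/-- An infinite path of edges. -/
def IsInfPath (d r : E1 → E0) (e : ℕ → E1) : Prop := ∀ k : ℕ, d (e k) = r (e (k + 1))

/-- `S` is the negative orbit space `Orb⁻(v, e)` of some negative orbit `e` of `v`:
either `v` itself (when `v` is singular), or a finite path ending at a singular vertex
with range `v`, or an infinite path with range `v`. -/
def IsNegOrbitSet (d r : E1 → E0) (v : E0) (S : Set E0) : Prop :=
  (v ∈ Sg r ∧ S = {v}) ∨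
  (∃ n : ℕ, ∃ e : Fin (n + 1) → E1, IsPath d r e ∧ r (e 0) = v ∧
    d (e (Fin.last n)) ∈ Sg r ∧ S = insert v (Set.range (d ∘ e))) ∨
  (∃ e : ℕ → E1, IsInfPath d r e ∧ r (e 0) = v ∧ S = insert v (Set.range (d ∘ e)))

/-- The orbit space `Orb(v, e) = ⋃_{v' ∈ Orb⁻(v,e)} Orb⁺(v')`, expressed in terms of the
negative orbit space `S = Orb⁻(v, e)`. -/
def Orb (d r : E1 → E0) (S : Set E0) : Set E0 := ⋃ v ∈ S, OrbPlus d r v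

/-- A maximal head: a non-empty closed invariant set in which any two points can be
approximated by the positive orbit of a common vertex. -/
def MaximalHead (d r : E1 → E0) (X : Set E0) : Prop :=
  X.Nonempty ∧ IsClosed X ∧ Invariant d r X ∧
  ∀ v1 ∈ X, ∀ v2 ∈ X, ∀ V1 ∈ 𝓝 v1, ∀ V2 ∈ 𝓝 v2,
    ∃ w ∈ X, (OrbPlus d r w ∩ V1).Nonempty ∧ (OrbPlus d r w ∩ V2).Nonempty

/-- Hereditary set: `d (r⁻¹ (V)) ⊆ V`. -/
def Hereditary (d r : E1 → E0) (V : Set E0) : Prop := d '' (r ⁻¹' V) ⊆ V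

/-- Saturated set: every regular vertex all of whose received edges have domain in `V`
belongs to `V`. -/
def Saturated (d r : E1 → E0) (V : Set E0) : Prop :=
  ∀ v ∈ Rg r, d '' (r ⁻¹' {v}) ⊆ V → v ∈ V

/-- `H(V) = ⋃ₙ dⁿ ((rⁿ)⁻¹ (V))`. -/
def HSet (d r : E1 → E0) (V : Set E0) : Set E0 :=
  V ∪ {w | ∃ n : ℕ, ∃ e : Fin (n + 1) → E1,
    IsPath d r e ∧ r (e 0) ∈ V ∧ d (e (Fin.last n)) = w}

/-- The sequence `V₀ = V`, `V_{k+1} = V_k ∪ {v ∈ E⁰_rg : d (r⁻¹ (v)) ⊆ V_k}`. -/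
def SatSeq (d r : E1 → E0) (V : Set E0) : ℕ → Set E0
  | 0 => V
  | k + 1 => SatSeq d r V k ∪ {v | v ∈ Rg r ∧ d '' (r ⁻¹' {v}) ⊆ SatSeq d r V k}

/-- The saturation `S(V) = ⋃ₖ V_k`. -/
def SatSet (d r : E1 → E0) (V : Set E0) : Set E0 := ⋃ k, SatSeq d r V k

/-- Sources of the subgraph on a closed positively invariant set `X`, viewed in `E⁰`:
`X⁰_sce = X⁰ \ closure_{X⁰} (r (X¹))` where `X¹ = d⁻¹ (X⁰)`. -/
def SceIn (d r : E1 → E0) (X : Set E0) : Set E0 := X \ closure (r '' (d ⁻¹' X))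

/-- Vertices of the subgraph on `X` having a relative neighborhood with compact
`r`-preimage in `X¹ = d⁻¹(X⁰)`. -/
def FinIn (d r : E1 → E0) (X : Set E0) : Set E0 :=
  {v | v ∈ X ∧ ∃ V ∈ 𝓝 v, IsCompact (r ⁻¹' (V ∩ X) ∩ d ⁻¹' X)}

/-- Infinite receivers of the subgraph on `X`. -/
def InfIn (d r : E1 → E0) (X : Set E0) : Set E0 := X \ FinIn d r X

/-- Regular vertices of the subgraph on `X`. -/
def RgIn (d r : E1 → E0) (X : Set E0) : Set E0 := FinIn d r X \ closure (SceIn d r X)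

/-- Singular vertices of the subgraph on `X`. -/
def SgIn (d r : E1 → E0) (X : Set E0) : Set E0 := X \ RgIn d r X

/-!
The positive orbits along a negative orbit are nested, since each vertex `d (eₖ)` is the
range of the edge `eₖ₊₁` out of the next one. Hence any two points of `Orb(v, e)` lie in the
positive orbit of a single vertex of the negative orbit, which gives the approximation property
on the closure. Invariance passes to the closure: positive invariance because `d` is open and
`r` continuous, negative invariance by compactness of `r⁻¹(V)` around a regular vertex.
-/

section Orbits

omit [TopologicalSpace E0] [TopologicalSpace E1]

variable {d r : E1 → E0}

def EdgeRel (d r : E1 → E0) (a b : E0) : Prop := ∃ f : E1, d f = a ∧ r f = b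

theorem IsPath.tail {n : ℕ} {e : Fin (n + 2) → E1} (he : IsPath d r e) :
    IsPath d r (Fin.tail e) := fun i => by
  simpa only [Fin.tail, Fin.succ_castSucc] using he i.succ

theorem IsPath.cons {n : ℕ} {e : Fin (n + 1) → E1} {f : E1} (he : IsPath d r e)
    (hf : d f = r (e 0)) : IsPath d r (Fin.cons f e : Fin (n + 2) → E1) := fun i => by
  cases i using Fin.cases with
  | zero => simpa using hf
  | succ j => simpa only [← Fin.succ_castSucc, Fin.cons_succ] using he j

theorem IsPath.reflTransGen {n : ℕ} {e : Fin (n + 1) → E1} (he : IsPath d r e) :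
    Relation.ReflTransGen (EdgeRel d r) (d (e (Fin.last n))) (r (e 0)) := by
  induction n with
  | zero => exact .single ⟨e 0, rfl, rfl⟩
  | succ n ih =>
    have h := ih he.tail
    simp only [Fin.tail, Fin.succ_last] at h
    exact h.tail ⟨e 0, by simpa using he 0, rfl⟩

theorem mem_orbPlus_iff {v w : E0} :
    w ∈ OrbPlus d r v ↔ Relation.ReflTransGen (EdgeRel d r) v w := by
  constructor
  · rintro (rfl | ⟨n, e, he, rfl, rfl⟩)
    · exact .refl
    · exact he.reflTransGen
  · intro h
    induction h with
    | refl => exact Or.inl rfl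
    | tail _ hbw ih =>
      obtain ⟨f, hdf, rfl⟩ := hbw
      rcases ih with rfl | ⟨n, e, he, hlast, h0⟩
      · exact Or.inr ⟨0, fun _ => f, fun i => i.elim0, hdf, rfl⟩
      · refine Or.inr ⟨n + 1, Fin.cons f e, he.cons (hdf.trans h0.symm), ?_, rfl⟩
        simpa only [← Fin.succ_last, Fin.cons_succ] using hlast

theorem mem_orbPlus_self (v : E0) : v ∈ OrbPlus d r v := Or.inl rfl

theorem orbPlus_subset_of_mem {a b : E0} (h : a ∈ OrbPlus d r b) :
    OrbPlus d r a ⊆ OrbPlus d r b := fun _ hx =>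
  mem_orbPlus_iff.2 ((mem_orbPlus_iff.1 h).trans (mem_orbPlus_iff.1 hx))

theorem orbPlus_r_subset_orbPlus_d (f : E1) : OrbPlus d r (r f) ⊆ OrbPlus d r (d f) :=
  orbPlus_subset_of_mem (mem_orbPlus_iff.2 (.single ⟨f, rfl, rfl⟩))

theorem mem_orb {S : Set E0} {w : E0} : w ∈ Orb d r S ↔ ∃ s ∈ S, w ∈ OrbPlus d r s :=
  mem_iUnion₂.trans (by simp only [exists_prop])

theorem subset_orb (S : Set E0) : S ⊆ Orb d r S := fun s hs =>
  mem_orb.2 ⟨s, hs, mem_orbPlus_self s⟩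

theorem posInv_orb (S : Set E0) : PosInv d r (Orb d r S) := fun f hf => by
  obtain ⟨s, hs, hfs⟩ := mem_orb.1 hf
  exact mem_orb.2 ⟨s, hs, orbPlus_subset_of_mem hfs (orbPlus_r_subset_orbPlus_d f (mem_orbPlus_self _))⟩

theorem exists_edge_of_mem_orbPlus {v w : E0} (hw : w ∈ OrbPlus d r v) (hne : w ≠ v) :
    ∃ f : E1, r f = w ∧ d f ∈ OrbPlus d r v := by
  rcases (mem_orbPlus_iff.1 hw).cases_tail with rfl | ⟨c, hvc, f, rfl, hfw⟩
  · exact absurd rfl hne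
  · exact ⟨f, hfw, mem_orbPlus_iff.2 hvc⟩

theorem isChain_insert_range {ι α : Type*} [LinearOrder ι] [OrderBot ι] [Preorder α]
    {f : ι → α} {a : α} (hf : Monotone f) (ha : a ≤ f ⊥) : IsChain (· ≤ ·) (insert a (range f)) :=
  hf.isChain_range.insert <| by
    rintro _ ⟨i, rfl⟩ -
    exact Or.inl (ha.trans (hf bot_le))

theorem isChain_orbPlus_insert_range {ι : Type*} [LinearOrder ι] [OrderBot ι] {e : ι → E1}
    {v : E0} (he : Monotone (OrbPlus d r ∘ d ∘ e)) (hv : r (e ⊥) = v) :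
    IsChain (· ≤ ·) (OrbPlus d r '' insert v (range (d ∘ e))) := by
  rw [image_insert_eq, ← range_comp]
  exact isChain_insert_range he (hv ▸ orbPlus_r_subset_orbPlus_d (e ⊥))

theorem exists_orbPlus_meets_of_isChain {S : Set E0} (hS : IsChain (· ≤ ·) (OrbPlus d r '' S))
    {U₁ U₂ : Set E0} (h₁ : (U₁ ∩ Orb d r S).Nonempty) (h₂ : (U₂ ∩ Orb d r S).Nonempty) :
    ∃ w ∈ S, (OrbPlus d r w ∩ U₁).Nonempty ∧ (OrbPlus d r w ∩ U₂).Nonempty := by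
  obtain ⟨u₁, hu₁, hO₁⟩ := h₁
  obtain ⟨u₂, hu₂, hO₂⟩ := h₂
  obtain ⟨s₁, hs₁, hus₁⟩ := mem_orb.1 hO₁
  obtain ⟨s₂, hs₂, hus₂⟩ := mem_orb.1 hO₂
  rcases hS.total (mem_image_of_mem _ hs₁) (mem_image_of_mem _ hs₂) with h | h
  · exact ⟨s₂, hs₂, ⟨u₁, h hus₁, hu₁⟩, ⟨u₂, hus₂, hu₂⟩⟩
  · exact ⟨s₁, hs₁, ⟨u₁, hus₁, hu₁⟩, ⟨u₂, h hus₂, hu₂⟩⟩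

end Orbits

theorem isOpen_rg (r : E1 → E0) : IsOpen (Rg r) := by
  refine IsOpen.sdiff (isOpen_iff_mem_nhds.2 ?_) isClosed_closure
  rintro v ⟨V, hV, hc⟩
  filter_upwards [interior_mem_nhds.2 hV] with x hx
  exact ⟨V, mem_interior_iff_mem_nhds.1 hx, hc⟩

section Invariance

variable {d r : E1 → E0}

theorem NegInv.orb {S : Set E0} (hS : NegInv d r S) : NegInv d r (Orb d r S) := by
  rintro w ⟨hw, hreg⟩
  obtain ⟨s, hs, hws⟩ := mem_orb.1 hw
  by_cases hne : w = s
  · subst hne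
    obtain ⟨f, hf, hfS⟩ := hS w ⟨hs, hreg⟩
    exact ⟨f, hf, subset_orb S hfS⟩
  · obtain ⟨f, hf, hfs⟩ := exists_edge_of_mem_orbPlus hws hne
    exact ⟨f, hf, mem_orb.2 ⟨s, hs, hfs⟩⟩

theorem PosInv.closure (hd : IsOpenMap d) (hr : Continuous r) {X : Set E0}
    (hX : PosInv d r X) : PosInv d r (closure X) := by
  intro f hf
  rw [mem_closure_iff] at hf ⊢
  intro U hU hfU
  obtain ⟨_, ⟨g, hgU, rfl⟩, hgX⟩ := hf _ (hd _ (hU.preimage hr)) ⟨f, hfU, rfl⟩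
  exact ⟨r g, hgU, hX g hgX⟩

/-- Edges from `X` whose ranges tend to `w` stay in the compact set `r⁻¹(V)`; a cluster point
of them is an edge into `w` from `closure X`. -/
theorem NegInv.closure [T2Space E0] (hd : Continuous d) (hr : Continuous r) {X : Set E0}
    (hX : NegInv d r X) : NegInv d r (closure X) := by
  rintro w ⟨hw, hreg⟩
  obtain ⟨V, hV, hc⟩ := hreg.1
  let G := Filter.comap r (𝓝 w) ⊓ Filter.principal (d ⁻¹' X)
  have hG : G.NeBot := by
    refine Filter.inf_principal_neBot_iff.2 fun U ⟨N, hN, hNU⟩ => ?_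
    obtain ⟨w', ⟨hw'N, hw'reg⟩, hw'X⟩ :=
      mem_closure_iff_nhds.1 hw _ (Filter.inter_mem hN ((isOpen_rg r).mem_nhds hreg))
    obtain ⟨f, rfl, hfX⟩ := hX _ ⟨hw'X, hw'reg⟩
    exact ⟨f, hNU hw'N, hfX⟩
  obtain ⟨f, -, hf⟩ := hc.exists_clusterPt (f := G)
    (inf_le_left.trans (Filter.le_principal_iff.2 (Filter.preimage_mem_comap hV)))
  refine ⟨f, eq_of_nhds_neBot (hf.map hr.continuousAt (Filter.tendsto_iff_comap.2 inf_le_left)), ?_⟩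
  exact hd.closure_preimage_subset X (mem_closure_iff_clusterPt.2 (hf.mono inf_le_right))

namespace IsNegOrbitSet

variable {v : E0} {S : Set E0}

theorem mem_self (hS : IsNegOrbitSet d r v S) : v ∈ S := by
  rcases hS with ⟨-, rfl⟩ | ⟨-, -, -, -, -, rfl⟩ | ⟨-, -, -, rfl⟩
  exacts [rfl, mem_insert _ _, mem_insert _ _]

theorem negInv (hS : IsNegOrbitSet d r v S) : NegInv d r S := by
  rcases hS with ⟨hv, rfl⟩ | ⟨n, e, he, hv, hlast, rfl⟩ | ⟨e, he, hv, rfl⟩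
  · rintro w ⟨rfl, hw⟩
    exact absurd hw hv
  · rintro w ⟨rfl | ⟨k, rfl⟩, hw⟩
    · exact ⟨e 0, hv, mem_insert_of_mem _ ⟨0, rfl⟩⟩
    rcases k.eq_castSucc_or_eq_last with ⟨i, rfl⟩ | rfl
    · exact ⟨e i.succ, (he i).symm, mem_insert_of_mem _ ⟨i.succ, rfl⟩⟩
    · exact absurd hw hlast
  · rintro w ⟨rfl | ⟨k, rfl⟩, -⟩
    · exact ⟨e 0, hv, mem_insert_of_mem _ ⟨0, rfl⟩⟩
    · exact ⟨e (k + 1), (he k).symm, mem_insert_of_mem _ ⟨k + 1, rfl⟩⟩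

theorem isChain_orbPlus (hS : IsNegOrbitSet d r v S) : IsChain (· ≤ ·) (OrbPlus d r '' S) := by
  rcases hS with ⟨-, rfl⟩ | ⟨n, e, he, hv, -, rfl⟩ | ⟨e, he, hv, rfl⟩
  · exact (subsingleton_singleton.image _).isChain
  · refine isChain_orbPlus_insert_range (Fin.monotone_iff_le_succ.2 fun i => ?_) hv
    simpa only [Function.comp_apply, he i] using orbPlus_r_subset_orbPlus_d (e i.succ)
  · refine isChain_orbPlus_insert_range (monotone_nat_of_le_succ fun k => ?_) hv
    simpa only [Function.comp_apply, he k] using orbPlus_r_subset_orbPlus_d (e (k + 1))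

end IsNegOrbitSet

end Invariance

theorem stmt9_general [T2Space E0]
    (d r : E1 → E0) (hd : IsLocalHomeomorph d) (hr : Continuous r)
    (v : E0) (S : Set E0) (hS : IsNegOrbitSet d r v S) :
    MaximalHead d r (closure (Orb d r S)) := by
  refine ⟨⟨v, subset_closure (subset_orb S hS.mem_self)⟩, isClosed_closure,
    ⟨(posInv_orb S).closure hd.isOpenMap hr, hS.negInv.orb.closure hd.continuous hr⟩, ?_⟩
  intro v₁ hv₁ v₂ hv₂ V₁ hV₁ V₂ hV₂
  obtain ⟨w, hwS, hw⟩ := exists_orbPlus_meets_of_isChain hS.isChain_orbPlus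
    (mem_closure_iff_nhds.1 hv₁ V₁ hV₁) (mem_closure_iff_nhds.1 hv₂ V₂ hV₂)
  exact ⟨w, subset_closure (subset_orb S hwS), hw⟩

theorem stmt9 [LocallyCompactSpace E0] [T2Space E0] [LocallyCompactSpace E1] [T2Space E1]
    (d r : E1 → E0) (hd : IsLocalHomeomorph d) (hr : Continuous r)
    (v : E0) (S : Set E0) (hS : IsNegOrbitSet d r v S) :
    MaximalHead d r (closure (Orb d r S)) :=
  stmt9_general d r hd hr v S hS
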